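/- Let γ_v denote the centered Gaussian measure on ℝ with variance v > 0. Set c₁ := γ₁((−2,2)), c₂ := γ₄((−2,2)), λ₁ := (2c₁ − c₂ − 1)/(c₁ − c₂) and λ₂ := (2c₁ − c₂)/(c₁ − c₂), and for t > 0, x ∈ ℝ, let Σ(t,x) := λ₁ if |x| < 2√t and Σ(t,x) := λ₂ otherwise. Then c₁ > c₂, and for every t > 0 one has ∫_ℝ Σ(t,x) dγ_t(x) = 1 and ∫_ℝ Σ(t,x) dγ_{4t}(x) = 2. (Since γ_t is the law of a standard Brownian motion W at time t and γ_{4t} is the law of 2W at time t, this exhibits two distinct solutions of the distribution-dependent SDE dX_t = σ(t,[X_t]) dW_t with σ(t,m) := ∫ Σ(t,x) m(dx) and X_0 = 0.) -/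

import Mathlib

/-!
`Σ(t, ·)` takes only two values, so its integral against a probability measure `m` is an affine
function of `m(|x| < 2√t)`. By Gaussian scaling this mass is `c₁` under `γ_t` and `c₂` under
`γ_{4t}`, and `λ₁, λ₂` solve the resulting 2×2 linear system, which is nondegenerate because
`c₂ = γ₁((−1, 1)) < γ₁((−2, 2)) = c₁`, the Gaussian charging every nonempty open set.
-/

open MeasureTheory ProbabilityTheory

/-- `c₁ = γ₁((−2,2))` where `γ_v` is the centered Gaussian of variance `v`. -/
noncomputable def c1 : ℝ := (gaussianReal 0 1 (Set.Ioo (-2 : ℝ) 2)).toReal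

/-- `c₂ = γ₄((−2,2))`. -/
noncomputable def c2 : ℝ := (gaussianReal 0 4 (Set.Ioo (-2 : ℝ) 2)).toReal

noncomputable def lam1 : ℝ := (2 * c1 - c2 - 1) / (c1 - c2)

noncomputable def lam2 : ℝ := (2 * c1 - c2) / (c1 - c2)

/-- `Σ(t,x) = λ₁` if `|x| < 2√t`, and `λ₂` otherwise. -/
noncomputable def SigmaEx (t x : ℝ) : ℝ := if |x| < 2 * Real.sqrt t then lam1 else lam2

open Set
open scoped NNReal

lemma gaussianReal_Ioo_mul_sqrt (v : ℝ≥0) {t : ℝ} (ht : 0 < t) (a : ℝ) :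
    gaussianReal 0 (t.toNNReal * v) (Ioo (-(a * √t)) (a * √t)) =
      gaussianReal 0 v (Ioo (-a) a) := by
  have hst : 0 < √t := Real.sqrt_pos.mpr ht
  have hvar : t.toNNReal = .mk (√t ^ 2) (sq_nonneg _) := by
    ext; simp [Real.sq_sqrt ht.le, ht.le]
  have hmap := gaussianReal_map_const_mul (μ := 0) (v := v) √t
  rw [mul_zero] at hmap
  rw [hvar, ← hmap, Measure.map_apply (measurable_const_mul _) measurableSet_Ioo,
    preimage_const_mul_Ioo₀ _ _ hst, neg_div, mul_div_cancel_right₀ _ hst.ne']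

instance isOpenPosMeasure_gaussianReal (m : ℝ) (v : ℝ≥0) [NeZero v] :
    (gaussianReal m v).IsOpenPosMeasure :=
  (gaussianReal_absolutelyContinuous' m (NeZero.ne v)).isOpenPosMeasure

lemma measure_Ioo_neg_lt_measure_Ioo_neg {μ : Measure ℝ} [μ.IsOpenPosMeasure]
    [IsFiniteMeasure μ] {a b : ℝ} (ha : 0 ≤ a) (hab : a < b) :
    μ (Ioo (-a) a) < μ (Ioo (-b) b) := by
  have hdisj : Disjoint (Ioo (-a) a) (Ioo a b) :=
    disjoint_left.mpr fun _ h₁ h₂ ↦ lt_asymm h₁.2 h₂.1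
  have hpos : 0 < μ (Ioo a b) := isOpen_Ioo.measure_pos μ (nonempty_Ioo.mpr hab)
  calc μ (Ioo (-a) a) < μ (Ioo (-a) a) + μ (Ioo a b) :=
        ENNReal.lt_add_right (measure_ne_top _ _) hpos.ne'
    _ = μ (Ioo (-a) a ∪ Ioo a b) := (measure_union hdisj measurableSet_Ioo).symm
    _ ≤ μ (Ioo (-b) b) := measure_mono (union_subset (Ioo_subset_Ioo (by linarith) hab.le)
        (Ioo_subset_Ioo (by linarith) le_rfl))

lemma c2_lt_c1 : c2 < c1 := by
  have hc2 : c2 = (gaussianReal 0 1 (Ioo (-1) 1)).toReal := by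
    have h := gaussianReal_Ioo_mul_sqrt 1 (t := 4) (by norm_num) 1
    have hsqrt : √(4 : ℝ) = 2 := by
      rw [show (4 : ℝ) = 2 ^ 2 by norm_num, Real.sqrt_sq zero_le_two]
    rw [hsqrt] at h
    simpa [c2] using congrArg ENNReal.toReal h
  rw [hc2, c1]
  exact ENNReal.toReal_strict_mono (measure_ne_top _ _)
    (measure_Ioo_neg_lt_measure_Ioo_neg zero_le_one one_lt_two)

lemma integral_ite_abs_lt (μ : Measure ℝ) [IsProbabilityMeasure μ] (r a b : ℝ) :
    ∫ x, (if |x| < r then a else b) ∂μ = (a - b) * μ.real (Ioo (-r) r) + b := by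
  have hind : ∀ x,
      (if |x| < r then a else b) = (Ioo (-r) r).indicator (fun _ ↦ a - b) x + b := by
    intro x
    by_cases hx : |x| < r
    · simp [hx, abs_lt.mp hx]
    · simp [hx, abs_lt.not.mp hx]
  simp_rw [hind]
  rw [integral_add ((integrable_const _).indicator measurableSet_Ioo) (integrable_const b),
    integral_indicator_const _ measurableSet_Ioo, integral_const, probReal_univ, smul_eq_mul,
    smul_eq_mul, one_mul, mul_comm]

lemma integral_sigmaEx (t : ℝ) (μ : Measure ℝ) [IsProbabilityMeasure μ] :
    ∫ x, SigmaEx t x ∂μ =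
      (2 * c1 - c2 - μ.real (Ioo (-(2 * √t)) (2 * √t))) / (c1 - c2) := by
  rw [show SigmaEx t = fun x ↦ if |x| < 2 * √t then lam1 else lam2 from rfl,
    integral_ite_abs_lt, lam1, lam2]
  ring

/-- `c₁ > c₂`, and for every `t > 0`,
`∫ Σ(t,·) dγ_t = 1` and `∫ Σ(t,·) dγ_{4t} = 2`. -/
theorem stmt_10 :
    c2 < c1 ∧
    ∀ t : ℝ, 0 < t →
      (∫ x, SigmaEx t x ∂(gaussianReal 0 t.toNNReal)) = 1 ∧
      (∫ x, SigmaEx t x ∂(gaussianReal 0 (4 * t).toNNReal)) = 2 := by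
  refine ⟨c2_lt_c1, fun t ht ↦ ?_⟩
  have hne : c1 - c2 ≠ 0 := sub_ne_zero.mpr c2_lt_c1.ne'
  have hγt : (gaussianReal 0 t.toNNReal).real (Ioo (-(2 * √t)) (2 * √t)) = c1 := by
    simpa [measureReal_def, c1] using congrArg ENNReal.toReal (gaussianReal_Ioo_mul_sqrt 1 ht 2)
  have hγ4t : (gaussianReal 0 (4 * t).toNNReal).real (Ioo (-(2 * √t)) (2 * √t)) = c2 := by
    rw [mul_comm, Real.toNNReal_mul ht.le, measureReal_def, gaussianReal_Ioo_mul_sqrt _ ht 2]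
    simp [c2]
  rw [integral_sigmaEx, integral_sigmaEx, hγt, hγ4t]
  constructor <;> field_simp <;> ring
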